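/- Let 𝔤 be a finite-dimensional real Lie algebra with inner product, and let 𝔥 be an ideal of codimension one with 𝔥 = [𝔤,𝔤] and 𝔤 = 𝔥 + Z(𝔤), where Z(𝔤) is the centre of 𝔤. If {Y₁,…,Yₙ} is an orthonormal basis of 𝔥 (with the restricted inner product) consisting of vectors that are geodesic in 𝔥, and W is a unit vector orthogonal to 𝔥, then {Y₁,…,Yₙ,W} is an orthonormal basis of 𝔤 consisting of geodesic vectors of 𝔤. -/

import Mathlib

/-!
The appended vector `W` is orthogonal to `H = [𝔤,𝔤]`, which contains every `[X, W]`, so it is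
geodesic. A vector `Y ∈ H` geodesic in `H` stays geodesic in `𝔤 = H + Z(𝔤)`, since the central
component of `X` brackets trivially with `Y`. Orthonormality gives linear independence, and
`n + 1 = dim 𝔤` vectors then span.
-/

/-- An inner product on a real vector space, given as a positive-definite
symmetric bilinear form. -/
structure IsInnerProduct {L : Type*} [AddCommGroup L] [Module ℝ L]
    (B : L →ₗ[ℝ] L →ₗ[ℝ] ℝ) : Prop where
  symm : ∀ x y : L, B x y = B y x
  posdef : ∀ x : L, x ≠ 0 → 0 < B x x

/-- `Y` is a geodesic vector: `Y ≠ 0` and `⟨[X,Y],Y⟩ = 0` for all `X`. -/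
def IsGeodesicVector {L : Type*} [LieRing L] [LieAlgebra ℝ L]
    (B : L →ₗ[ℝ] L →ₗ[ℝ] ℝ) (Y : L) : Prop :=
  Y ≠ 0 ∧ ∀ X : L, B ⁅X, Y⁆ Y = 0

/-- A family of vectors is orthonormal with respect to the bilinear form `B`. -/
def IsOrthonormalFamily {L : Type*} [AddCommGroup L] [Module ℝ L]
    (B : L →ₗ[ℝ] L →ₗ[ℝ] ℝ) {ι : Type*} [DecidableEq ι] (v : ι → L) : Prop :=
  ∀ i j, B (v i) (v j) = if i = j then 1 else 0

/-- A real Lie algebra is unimodular if every adjoint map is trace-free. -/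
def IsUnimodularLie (L : Type*) [LieRing L] [LieAlgebra ℝ L] : Prop :=
  ∀ X : L, LinearMap.trace ℝ L (LieAlgebra.ad ℝ L X) = 0

namespace IsOrthonormalFamily

variable {L : Type*} [AddCommGroup L] [Module ℝ L] {B : L →ₗ[ℝ] L →ₗ[ℝ] ℝ}

theorem linearIndependent {ι : Type*} [DecidableEq ι] {v : ι → L}
    (hv : IsOrthonormalFamily B v) : LinearIndependent ℝ v := by
  rw [linearIndependent_iff']
  intro s g hg i hi
  have hcoeff : B (∑ j ∈ s, g j • v j) (v i) = g i := by
    simp [fun j => hv j i, hi]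
  simpa [hg] using hcoeff.symm

theorem cons {n : ℕ} {v : Fin n → L} (hv : IsOrthonormalFamily B v) {W : L} (hW : B W W = 1)
    (hWv : ∀ i, B W (v i) = 0) (hvW : ∀ i, B (v i) W = 0) :
    IsOrthonormalFamily B (Fin.cons W v : Fin (n + 1) → L) := by
  intro i j
  cases i using Fin.cases <;> cases j using Fin.cases <;>
    simp [hW, hWv, hvW, hv _ _, Fin.succ_ne_zero, (Fin.succ_ne_zero _).symm]

end IsOrthonormalFamily

section Geodesic

variable {L : Type*} [LieRing L] [LieAlgebra ℝ L] {B : L →ₗ[ℝ] L →ₗ[ℝ] ℝ}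

theorem isGeodesicVector_of_orthogonal_derivedSeries {W : L} (hW : W ≠ 0)
    (hperp : ∀ v ∈ LieAlgebra.derivedSeries ℝ L 1, B v W = 0) : IsGeodesicVector B W :=
  ⟨hW, fun X => hperp _ (LieSubmodule.lie_mem_lie (LieSubmodule.mem_top X)
    (LieSubmodule.mem_top W))⟩

theorem isGeodesicVector_of_sup_center_eq_top {K : Submodule ℝ L}
    (hK : K ⊔ (LieAlgebra.center ℝ L : Submodule ℝ L) = ⊤) {Y : L} (hY : Y ≠ 0)
    (hgeo : ∀ X ∈ K, B ⁅X, Y⁆ Y = 0) : IsGeodesicVector B Y := by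
  refine ⟨hY, fun X => ?_⟩
  obtain ⟨k, hk, z, hz, rfl⟩ := Submodule.mem_sup.mp (hK ▸ Submodule.mem_top : X ∈ K ⊔ _)
  have hzY : ⁅z, Y⁆ = 0 := by rw [← lie_skew, hz Y, neg_zero]
  rw [add_lie, hzY, add_zero]
  exact hgeo k hk

end Geodesic

theorem append_unit_normal_to_geodesic_basis_of_derived_general
    {L : Type*} [LieRing L] [LieAlgebra ℝ L]
    (B : L →ₗ[ℝ] L →ₗ[ℝ] ℝ) (hB : IsInnerProduct B)
    (H : LieIdeal ℝ L)
    (hcodim : Module.finrank ℝ H + 1 = Module.finrank ℝ L)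
    (hderived : LieAlgebra.derivedSeries ℝ L 1 = H)
    (hsum : (H : Submodule ℝ L) ⊔ (LieAlgebra.center ℝ L : Submodule ℝ L) = ⊤)
    {n : ℕ} (Y : Fin n → L)
    (hspan : Submodule.span ℝ (Set.range Y) = (H : Submodule ℝ L))
    (horth : IsOrthonormalFamily B Y)
    (hgeo : ∀ i, Y i ≠ 0 ∧ ∀ X ∈ H, B ⁅X, Y i⁆ (Y i) = 0)
    (W : L) (hW : B W W = 1) (hWperp : ∀ v ∈ H, B W v = 0) :
    LinearIndependent ℝ (Fin.cons W Y : Fin (n + 1) → L) ∧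
    Submodule.span ℝ (Set.range (Fin.cons W Y : Fin (n + 1) → L)) = ⊤ ∧
    IsOrthonormalFamily B (Fin.cons W Y : Fin (n + 1) → L) ∧
    ∀ i, IsGeodesicVector B ((Fin.cons W Y : Fin (n + 1) → L) i) := by
  have hmem (i : Fin n) : Y i ∈ (H : Submodule ℝ L) := hspan ▸ Submodule.subset_span ⟨i, rfl⟩
  have hW0 : W ≠ 0 := by
    rintro rfl
    simp at hW
  have horth' : IsOrthonormalFamily B (Fin.cons W Y : Fin (n + 1) → L) :=
    horth.cons hW (fun i => hWperp _ (hmem i)) (fun i => hB.symm _ _ ▸ hWperp _ (hmem i))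
  have hn : Module.finrank ℝ (H : Submodule ℝ L) = n := by
    rw [← hspan, finrank_span_eq_card horth.linearIndependent, Fintype.card_fin]
  have hindep := horth'.linearIndependent
  refine ⟨hindep, hindep.span_eq_top_of_card_eq_finrank ?_, horth', fun i => ?_⟩
  · rw [Fintype.card_fin, ← hn]
    exact hcodim
  cases i using Fin.cases with
  | zero =>
    exact isGeodesicVector_of_orthogonal_derivedSeries hW0 fun v hv =>
      hB.symm _ _ ▸ hWperp v (hderived ▸ hv)
  | succ k => exact isGeodesicVector_of_sup_center_eq_top hsum (hgeo k).1 (hgeo k).2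

/-- If `H` is a codimension-one ideal with `H = [𝔤,𝔤]` and
`𝔤 = H + Z(𝔤)`, then appending a unit vector `W ⊥ H` to an orthonormal basis of `H`
consisting of vectors geodesic in `H` yields an orthonormal basis of `𝔤` consisting
of geodesic vectors of `𝔤`. -/
theorem append_unit_normal_to_geodesic_basis_of_derived
    {L : Type*} [LieRing L] [LieAlgebra ℝ L] [Module.Finite ℝ L]
    (B : L →ₗ[ℝ] L →ₗ[ℝ] ℝ) (hB : IsInnerProduct B)
    (H : LieIdeal ℝ L)
    (hcodim : Module.finrank ℝ H + 1 = Module.finrank ℝ L)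
    (hderived : LieAlgebra.derivedSeries ℝ L 1 = H)
    (hsum : (H : Submodule ℝ L) ⊔ (LieAlgebra.center ℝ L : Submodule ℝ L) = ⊤)
    {n : ℕ} (Y : Fin n → L)
    (hmem : ∀ i, Y i ∈ H)
    (hindep : LinearIndependent ℝ Y)
    (hspan : Submodule.span ℝ (Set.range Y) = (H : Submodule ℝ L))
    (horth : IsOrthonormalFamily B Y)
    (hgeo : ∀ i, Y i ≠ 0 ∧ ∀ X ∈ H, B ⁅X, Y i⁆ (Y i) = 0)
    (W : L) (hW : B W W = 1) (hWperp : ∀ v ∈ H, B W v = 0) :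
    LinearIndependent ℝ (Fin.cons W Y : Fin (n + 1) → L) ∧
    Submodule.span ℝ (Set.range (Fin.cons W Y : Fin (n + 1) → L)) = ⊤ ∧
    IsOrthonormalFamily B (Fin.cons W Y : Fin (n + 1) → L) ∧
    ∀ i, IsGeodesicVector B ((Fin.cons W Y : Fin (n + 1) → L) i) :=
  append_unit_normal_to_geodesic_basis_of_derived_general B hB H hcodim hderived hsum Y hspan horth
    hgeo W hW hWperp
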